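/- For a finite-dimensional version of Moser's formula: let h_1, …, h_n be C¹ functions on the torus T^n satisfying ∂h_k/∂φ_j = ∂h_j/∂φ_k for all j,k and having zero average over T^n. Then the function f = Σ_{l=1}^n M_1⋯M_{l−1} L_l h_l satisfies ∂f/∂φ_j = h_j for all j, where M_j is averaging in the j-th angle and L_j g(φ) = (2π)^{-1} ∫_0^{2π} t g(φ_1,…,φ_{j−1}, φ_j + t, φ_{j+1},…,φ_n) dt. -/

import Mathlib

/-!
Differentiation in `φ_j` commutes with every `M_i` and `L_i`, so compatibility gives
`∂_j (M_1 ⋯ M_{l-1} L_l h_l) = M_1 ⋯ M_{l-1} L_l ∂_l h_j`. Integrating by parts in `t` and using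
periodicity, `L_l ∂_l g = g - M_l g`, so the `l`-th summand of `∂_j f` is
`M_1 ⋯ M_{l-1} h_j - M_1 ⋯ M_l h_j`. The sum telescopes to `h_j - M_1 ⋯ M_n h_j = h_j`.
-/

open scoped Real
open Function intervalIntegral

noncomputable section

variable {n : ℕ}

/-- Averaging in the `j`-th angle: `M_j g(φ) = (2π)⁻¹ ∫₀^{2π} g(…, φ_j + t, …) dt`. -/
def Mav (j : Fin n) (g : (Fin n → ℝ) → ℝ) (φ : Fin n → ℝ) : ℝ :=
  (2 * π)⁻¹ * ∫ t in (0)..(2 * π), g (update φ j (φ j + t))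

/-- The operator `L_j g(φ) = (2π)⁻¹ ∫₀^{2π} t g(…, φ_j + t, …) dt`. -/
def Lav (j : Fin n) (g : (Fin n → ℝ) → ℝ) (φ : Fin n → ℝ) : ℝ :=
  (2 * π)⁻¹ * ∫ t in (0)..(2 * π), t * g (update φ j (φ j + t))

/-- Iterated averaging over a list of angles. -/
def Mfold (l : List (Fin n)) (g : (Fin n → ℝ) → ℝ) : (Fin n → ℝ) → ℝ :=
  l.foldr Mav g

/-- The angle derivative `∂g/∂φ_j`. -/
def aD (j : Fin n) (g : (Fin n → ℝ) → ℝ) (φ : Fin n → ℝ) : ℝ :=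
  deriv (fun t => g (update φ j (φ j + t))) 0

open MeasureTheory Metric

section LineAverage

variable {E : Type*} [NormedAddCommGroup E] [NormedSpace ℝ E] {w : ℝ → ℝ} {g : E → ℝ}

def lineAverage (w : ℝ → ℝ) (v : E) (g : E → ℝ) (x : E) : ℝ :=
  (2 * π)⁻¹ * ∫ t in (0)..(2 * π), w t * g (x + t • v)

lemma hasDerivAt_comp_add_smul (hg : Differentiable ℝ g) (x v : E) (t : ℝ) :
    HasDerivAt (fun s : ℝ => g (x + s • v)) (lineDeriv ℝ g (x + t • v) v) t := by
  rw [(hg _).lineDeriv_eq_fderiv]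
  have hline : HasDerivAt (fun s : ℝ => x + s • v) v t := by
    simpa using ((hasDerivAt_id t).smul_const v).const_add x
  exact (hg _).hasFDerivAt.comp_hasDerivAt t hline

lemma lineAverage_sub {F G : E → ℝ} (hw : Continuous w) (hF : Continuous F) (hG : Continuous G)
    (v : E) : lineAverage w v (F - G) = lineAverage w v F - lineAverage w v G := by
  ext x
  simp only [lineAverage, Pi.sub_apply, mul_sub]
  rw [intervalIntegral.integral_sub, mul_sub] <;> apply Continuous.intervalIntegrable <;> fun_prop

lemma ContDiff.continuous_lineDeriv (hg : ContDiff ℝ 1 g) (v : E) :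
    Continuous fun y => lineDeriv ℝ g y v := by
  simp_rw [(hg.differentiable one_ne_zero).differentiableAt.lineDeriv_eq_fderiv]
  exact (hg.continuous_fderiv one_ne_zero).clm_apply continuous_const

lemma lineAverage_id_lineDeriv (hg : ContDiff ℝ 1 g) {v x : E}
    (hper : g (x + (2 * π) • v) = g x) :
    lineAverage id v (fun y => lineDeriv ℝ g y v) x = g x - lineAverage 1 v g x := by
  have hgd : Differentiable ℝ g := hg.differentiable one_ne_zero
  have hderiv : Continuous fun t : ℝ => lineDeriv ℝ g (x + t • v) v :=
    (hg.continuous_lineDeriv v).comp (by fun_prop)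
  have hparts := integral_mul_deriv_eq_deriv_mul
    (fun t _ => hasDerivAt_id t) (fun t _ => hasDerivAt_comp_add_smul hgd x v t)
    intervalIntegrable_const (hderiv.intervalIntegrable 0 (2 * π))
  simp only [id, one_mul, zero_mul, sub_zero, hper] at hparts
  simp only [lineAverage, id, Pi.one_apply, one_mul, hparts]
  field_simp

variable [ProperSpace E]

lemma hasFDerivAt_lineAverage (hw : Continuous w) (hg : ContDiff ℝ 1 g) (v x : E) :
    HasFDerivAt (lineAverage w v g)
      ((2 * π)⁻¹ • ∫ t in (0)..(2 * π), w t • fderiv ℝ g (x + t • v)) x := by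
  have hg' : Continuous (fderiv ℝ g) := hg.continuous_fderiv one_ne_zero
  have hF' : Continuous fun p : E × ℝ => w p.2 • fderiv ℝ g (p.1 + p.2 • v) := by fun_prop
  obtain ⟨C, hC⟩ := ((isCompact_closedBall x 1).prod isCompact_Icc).exists_bound_of_continuousOn
    (hF'.continuousOn (s := closedBall x 1 ×ˢ Set.Icc 0 (2 * π)))
  have hF (y : E) : Continuous fun t => w t * g (y + t • v) := by fun_prop
  refine HasFDerivAt.const_mul ?_ _
  refine hasFDerivAt_integral_of_dominated_of_fderiv_le (bound := fun _ => C)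
    (F' := fun y t => w t • fderiv ℝ g (y + t • v)) (ball_mem_nhds x one_pos)
    (.of_forall fun y => (hF y).aestronglyMeasurable) ((hF x).intervalIntegrable _ _)
    (hF'.comp (by fun_prop : Continuous fun t : ℝ => (x, t))).aestronglyMeasurable
    (.of_forall fun t ht y hy => ?_) intervalIntegrable_const (.of_forall fun t _ y _ => ?_)
  · rw [Set.uIoc_of_le (by positivity)] at ht
    exact hC (y, t) ⟨ball_subset_closedBall hy, ht.1.le, ht.2⟩
  · have := ((hg.differentiable one_ne_zero) (y + t • v)).hasFDerivAt.comp y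
      ((hasFDerivAt_id y).add_const (t • v))
    simpa using this.const_mul (w t)

lemma contDiff_lineAverage (hw : Continuous w) (hg : ContDiff ℝ 1 g) (v : E) :
    ContDiff ℝ 1 (lineAverage w v g) := by
  have hg' : Continuous (fderiv ℝ g) := hg.continuous_fderiv one_ne_zero
  rw [contDiff_one_iff_fderiv]
  refine ⟨fun x => (hasFDerivAt_lineAverage hw hg v x).differentiableAt, ?_⟩
  simp_rw [funext fun x => (hasFDerivAt_lineAverage hw hg v x).fderiv]
  have hF' : Continuous fun p : E × ℝ => w p.2 • fderiv ℝ g (p.1 + p.2 • v) := by fun_prop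
  exact (continuous_parametric_intervalIntegral_of_continuous' (μ := volume)
    (f := fun y t => w t • fderiv ℝ g (y + t • v)) hF' _ _).const_smul ((2 * π)⁻¹ : ℝ)

lemma lineDeriv_lineAverage (hw : Continuous w) (hg : ContDiff ℝ 1 g) (v x u : E) :
    lineDeriv ℝ (lineAverage w v g) x u = lineAverage w v (fun y => lineDeriv ℝ g y u) x := by
  have hg' : Continuous (fderiv ℝ g) := hg.continuous_fderiv one_ne_zero
  have hF := hasFDerivAt_lineAverage hw hg v x
  have hint : IntervalIntegrable (fun t => w t • fderiv ℝ g (x + t • v)) volume 0 (2 * π) :=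
    Continuous.intervalIntegrable (by fun_prop) _ _
  rw [hF.differentiableAt.lineDeriv_eq_fderiv, hF.fderiv, smul_apply,
    ContinuousLinearMap.intervalIntegral_apply hint]
  simp [lineAverage, (hg.differentiable one_ne_zero _).lineDeriv_eq_fderiv]

end LineAverage

lemma List.filter_lt_finRange (l : Fin n) :
    (List.finRange n).filter (· < l) = (List.finRange n).take l := by
  conv_lhs => rw [← List.take_append_drop l (List.finRange n)]
  rw [List.filter_append, List.filter_eq_self.2, List.filter_eq_nil_iff.2, List.append_nil]
  · intro x hx
    obtain ⟨i, hi, rfl⟩ := List.getElem_of_mem hx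
    simp [Fin.lt_def]
  · intro x hx
    obtain ⟨i, hi, rfl⟩ := List.getElem_of_mem hx
    simp only [List.length_take, List.length_finRange, lt_min_iff] at hi
    simpa [Fin.lt_def] using hi.1

lemma List.take_finRange_succ (l : Fin n) :
    (List.finRange n).take (l + 1) = (List.finRange n).take l ++ [l] := by
  simp [List.take_add_one]

lemma update_add_eq_add_smul_single (φ : Fin n → ℝ) (j : Fin n) (t : ℝ) :
    update φ j (φ j + t) = φ + t • Pi.single j 1 := by
  ext k
  rcases eq_or_ne k j with rfl | hk <;> simp [*]

lemma aD_eq_lineDeriv (j : Fin n) (g : (Fin n → ℝ) → ℝ) :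
    aD j g = fun φ => lineDeriv ℝ g φ (Pi.single j 1) := by
  ext φ
  simp only [aD, lineDeriv, update_add_eq_add_smul_single]

lemma aD_sum {ι : Type*} (s : Finset ι) {F : ι → (Fin n → ℝ) → ℝ}
    (hF : ∀ i ∈ s, Differentiable ℝ (F i)) (j : Fin n) :
    aD j (fun ψ => ∑ i ∈ s, F i ψ) = ∑ i ∈ s, aD j (F i) := by
  ext φ
  have hsum : HasFDerivAt (fun ψ => ∑ i ∈ s, F i ψ) (∑ i ∈ s, fderiv ℝ (F i) φ) φ :=
    HasFDerivAt.fun_sum fun i hi => (hF i hi φ).hasFDerivAt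
  simp only [aD_eq_lineDeriv, Finset.sum_apply, (hsum.hasLineDerivAt _).lineDeriv, sum_apply]
  exact Finset.sum_congr rfl fun i hi => ((hF i hi φ).lineDeriv_eq_fderiv).symm

lemma Mav_eq_lineAverage (j : Fin n) (g : (Fin n → ℝ) → ℝ) :
    Mav j g = lineAverage 1 (Pi.single j 1) g := by
  ext φ
  simp [Mav, lineAverage, update_add_eq_add_smul_single]

lemma Lav_eq_lineAverage (j : Fin n) (g : (Fin n → ℝ) → ℝ) :
    Lav j g = lineAverage id (Pi.single j 1) g := by
  ext φ
  simp [Lav, lineAverage, update_add_eq_add_smul_single]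

section Torus

variable {g : (Fin n → ℝ) → ℝ}

lemma contDiff_Mav (hg : ContDiff ℝ 1 g) (j : Fin n) : ContDiff ℝ 1 (Mav j g) := by
  rw [Mav_eq_lineAverage]
  exact contDiff_lineAverage continuous_one hg _

lemma contDiff_Lav (hg : ContDiff ℝ 1 g) (j : Fin n) : ContDiff ℝ 1 (Lav j g) := by
  rw [Lav_eq_lineAverage]
  exact contDiff_lineAverage continuous_id hg _

lemma aD_Mav (hg : ContDiff ℝ 1 g) (i j : Fin n) : aD i (Mav j g) = Mav j (aD i g) := by
  ext φ
  simp only [Mav_eq_lineAverage, aD_eq_lineDeriv]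
  exact lineDeriv_lineAverage continuous_one hg _ _ _

lemma aD_Lav (hg : ContDiff ℝ 1 g) (i j : Fin n) : aD i (Lav j g) = Lav j (aD i g) := by
  ext φ
  simp only [Lav_eq_lineAverage, aD_eq_lineDeriv]
  exact lineDeriv_lineAverage continuous_id hg _ _ _

lemma Lav_aD_self (hg : ContDiff ℝ 1 g) (j : Fin n)
    (hper : ∀ φ, g (update φ j (φ j + 2 * π)) = g φ) : Lav j (aD j g) = g - Mav j g := by
  ext φ
  have := lineAverage_id_lineDeriv hg (x := φ) (v := Pi.single j 1)
    (by rw [← update_add_eq_add_smul_single, hper])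
  rw [Lav_eq_lineAverage, Mav_eq_lineAverage]
  simpa [aD_eq_lineDeriv] using this

lemma contDiff_Mfold (L : List (Fin n)) (hg : ContDiff ℝ 1 g) : ContDiff ℝ 1 (Mfold L g) := by
  induction L with
  | nil => exact hg
  | cons k L ih => exact contDiff_Mav ih k

lemma aD_Mfold (L : List (Fin n)) (hg : ContDiff ℝ 1 g) (j : Fin n) :
    aD j (Mfold L g) = Mfold L (aD j g) := by
  induction L with
  | nil => rfl
  | cons k L ih => exact (aD_Mav (contDiff_Mfold L hg) j k).trans (congrArg (Mav k) ih)

lemma Mfold_sub (L : List (Fin n)) {F G : (Fin n → ℝ) → ℝ} (hF : ContDiff ℝ 1 F)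
    (hG : ContDiff ℝ 1 G) : Mfold L (F - G) = Mfold L F - Mfold L G := by
  induction L with
  | nil => rfl
  | cons k L ih =>
    change Mav k (Mfold L (F - G)) = Mav k (Mfold L F) - Mav k (Mfold L G)
    rw [ih, Mav_eq_lineAverage, Mav_eq_lineAverage, Mav_eq_lineAverage,
      lineAverage_sub continuous_one (contDiff_Mfold L hF).continuous
        (contDiff_Mfold L hG).continuous]

lemma Mfold_append_singleton (L : List (Fin n)) (k : Fin n) :
    Mfold (L ++ [k]) g = Mfold L (Mav k g) := by
  simp [Mfold, List.foldr_append]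

lemma sum_Mfold_take_sub_take_succ (φ : Fin n → ℝ) :
    ∑ l : Fin n, (Mfold ((List.finRange n).take l) g φ
      - Mfold ((List.finRange n).take (l + 1)) g φ) = g φ - Mfold (List.finRange n) g φ := by
  rw [Fin.sum_univ_eq_sum_range (fun m => Mfold ((List.finRange n).take m) g φ
    - Mfold ((List.finRange n).take (m + 1)) g φ), Finset.sum_range_sub', List.take_zero,
    List.take_of_length_le (by simp)]
  rfl

lemma aD_Mfold_Lav {f : (Fin n → ℝ) → ℝ} (hf : ContDiff ℝ 1 f) (hg : ContDiff ℝ 1 g)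
    {j l : Fin n} (hcompat : aD j f = aD l g)
    (hper : ∀ φ, g (update φ l (φ l + 2 * π)) = g φ) (L : List (Fin n)) :
    aD j (Mfold L (Lav l f)) = Mfold L g - Mfold (L ++ [l]) g := by
  rw [aD_Mfold L (contDiff_Lav hf l), aD_Lav hf, hcompat, Lav_aD_self hg l hper,
    Mfold_sub L hg (contDiff_Mav hg l), Mfold_append_singleton]

end Torus

/-- **finite-dimensional Moser formula.** Let `h_1, …, h_n` be `C¹` functions
on the torus `Tⁿ` satisfying `∂h_k/∂φ_j = ∂h_j/∂φ_k` and having zero average over `Tⁿ`.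
Then `f = Σ_{l=1}^n M_1 ⋯ M_{l−1} L_l h_l` satisfies `∂f/∂φ_j = h_j` for every `j`. -/
theorem moser_formula_finite (h : Fin n → (Fin n → ℝ) → ℝ)
    (hC1 : ∀ k, ContDiff ℝ 1 (h k))
    (hper : ∀ k j (φ : Fin n → ℝ), h k (update φ j (φ j + 2 * π)) = h k φ)
    (hcompat : ∀ j k (φ : Fin n → ℝ), aD j (h k) φ = aD k (h j) φ)
    (havg : ∀ k (φ : Fin n → ℝ), Mfold (List.finRange n) (h k) φ = 0) :
    ∀ (j : Fin n) (φ : Fin n → ℝ),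
      aD j (fun ψ => ∑ l : Fin n,
        Mfold (((List.finRange n).filter fun i => i < l)) (Lav l (h l)) ψ) φ = h j φ := by
  intro j φ
  simp_rw [List.filter_lt_finRange]
  rw [aD_sum _ fun l _ => (contDiff_Mfold _ (contDiff_Lav (hC1 l) l)).differentiable one_ne_zero]
  have hterm (l : Fin n) : aD j (Mfold ((List.finRange n).take l) (Lav l (h l))) =
      Mfold ((List.finRange n).take l) (h j) - Mfold ((List.finRange n).take (l + 1)) (h j) := by
    rw [aD_Mfold_Lav (hC1 l) (hC1 j) (funext (hcompat j l)) (hper j l), List.take_finRange_succ]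
  simp only [Finset.sum_apply, hterm, Pi.sub_apply]
  rw [sum_Mfold_take_sub_take_succ, havg, sub_zero]
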